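/- arXiv:1505.05001 — 2 statements merged into one kernel-verified Lean document; each statement's English description precedes it below -/
import Mathlib

section
/- Let C be a class of groups closed under taking subgroups, let B ≤ A and C₀ be groups with C₀ nontrivial, and suppose the special amalgam G = A ⋆_B C₀ is residually C. Then A and C₀ are residually C and the subgroup B is C-closed in A. -/
universe u

open Monoid

/-- A group `G` is *residually `C`*: every nontrivial element survives in a
surjective homomorphic image lying in the class `C`. -/
def ResiduallyC (C : ∀ (G : Type u) [Group G], Prop) (G : Type u) [Group G] : Prop :=
  ∀ g : G, g ≠ 1 → ∃ (Q : Type u) (_ : Group Q) (φ : G →* Q),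
    C Q ∧ Function.Surjective φ ∧ φ g ≠ 1
/-- The special amalgam `A ⋆_B C₀ = A ∗_B (B × C₀)`: the pushout of the
inclusion `B → A` and the homomorphism `B → B × C₀`, `b ↦ (b, 1)`, realised
as the quotient of the coproduct `A ∗ (B × C₀)` by the normal closure of the
elements identifying the two copies of `B`. -/
def SpecialAmalgam (A : Type u) [Group A] (B : Subgroup A) (C₀ : Type u) [Group C₀] :
    Type u :=
  (Monoid.Coprod A (B × C₀)) ⧸ Subgroup.normalClosure
    { x : Monoid.Coprod A (B × C₀) |
        ∃ b : B, x = Coprod.inl (b : A) * (Coprod.inr ((b, 1) : B × C₀))⁻¹ }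

instance (A : Type u) [Group A] (B : Subgroup A) (C₀ : Type u) [Group C₀] :
    Group (SpecialAmalgam A B C₀) :=
  QuotientGroup.Quotient.group _

/-- The canonical homomorphism `A → A ⋆_B C₀`. -/
def SpecialAmalgam.ofA (A : Type u) [Group A] (B : Subgroup A) (C₀ : Type u) [Group C₀] :
    A →* SpecialAmalgam A B C₀ :=
  (QuotientGroup.mk' _).comp Coprod.inl

/-- The canonical homomorphism `C₀ → A ⋆_B C₀`. -/
def SpecialAmalgam.ofC (A : Type u) [Group A] (B : Subgroup A) (C₀ : Type u) [Group C₀] :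
    C₀ →* SpecialAmalgam A B C₀ :=
  (QuotientGroup.mk' _).comp ((Coprod.inr).comp (MonoidHom.inr B C₀))
/-- A subset `X ⊆ G` is *`C`-closed* in `G`: every `g ∉ X` can be separated
from `X` in a surjective homomorphic image lying in `C`. -/
def CClosed (C : ∀ (G : Type u) [Group G], Prop) {G : Type u} [Group G] (X : Set G) : Prop :=
  ∀ g ∉ X, ∃ (Q : Type u) (_ : Group Q) (φ : G →* Q),
    C Q ∧ Function.Surjective φ ∧ φ g ∉ φ '' X

/-! Restricting to the images of `A` and `C₀`, both of which embed in `A ⋆_B C₀` by retractions,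
shows that they are residually `C`. For `B`, fix `c ≠ 1` in `C₀`: inside the amalgam, `c` commutes
with `B` but with no `a ∉ B`, so a quotient in `C` in which the commutator `⁅a, c⁆` survives
separates `a` from the image of `B`. The non-commutation is witnessed in the permutational wreath
product `((A ⧸ B) → C₀) ⋊ A`, where `c` is sent to the function supported at the coset `B`. -/

open scoped commutatorElement

theorem ResiduallyC.of_injective {C : ∀ (G : Type u) [Group G], Prop}
    (hSub : ∀ (G : Type u) [Group G] (H : Subgroup G), C G → C H)
    {G H : Type u} [Group G] [Group H] (hG : ResiduallyC C G) {ι : H →* G}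
    (hι : Function.Injective ι) : ResiduallyC C H := by
  intro h hh
  obtain ⟨Q, _, φ, hQ, -, hne⟩ := hG (ι h) ((map_ne_one_iff ι hι).2 hh)
  exact ⟨(φ.comp ι).range, inferInstance, (φ.comp ι).rangeRestrict, hSub Q _ hQ,
    MonoidHom.rangeRestrict_surjective _, fun h1 => hne (congrArg Subtype.val h1)⟩

theorem ResiduallyC.cClosed_of_not_commute {C : ∀ (G : Type u) [Group G], Prop}
    (hSub : ∀ (G : Type u) [Group G] (H : Subgroup G), C G → C H)
    {G H : Type u} [Group G] [Group H] (hG : ResiduallyC C G) (ι : H →* G) {X : Set H}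
    (hX : ∀ h ∉ X, ∃ z : G, (∀ x ∈ X, Commute (ι x) z) ∧ ¬Commute (ι h) z) :
    CClosed C X := by
  intro h hh
  obtain ⟨z, hXz, hhz⟩ := hX h hh
  obtain ⟨Q, _, φ, hQ, -, hne⟩ :=
    hG ⁅ι h, z⁆ (mt commutatorElement_eq_one_iff_commute.1 hhz)
  refine ⟨(φ.comp ι).range, inferInstance, (φ.comp ι).rangeRestrict, hSub Q _ hQ,
    MonoidHom.rangeRestrict_surjective _, ?_⟩
  rintro ⟨x, hx, hxh⟩
  have hφ : φ (ι x) = φ (ι h) := congrArg Subtype.val hxh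
  apply hne
  rw [map_commutatorElement, commutatorElement_eq_one_iff_commute, ← hφ]
  exact (hXz x hx).map φ

theorem SemidirectProduct.commute_inr_inl_iff {N G : Type*} [Group N] [Group G]
    {φ : G →* MulAut N} {g : G} {n : N} :
    Commute (inr g : N ⋊[φ] G) (inl n) ↔ φ g n = n := by
  rw [commute_iff_eq, ← mul_inv_eq_iff_eq_mul, ← map_inv, ← inl_aut, inl_inj]

theorem mulAutArrow_mulSingle_eq_self_iff {G X M : Type*} [Group G] [MulAction G X] [Monoid M]
    [DecidableEq X] {g : G} {x : X} {c : M} :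
    mulAutArrow g (Pi.mulSingle x c) = Pi.mulSingle x c ↔ g • x = x ∨ c = 1 := by
  have hsingle : mulAutArrow g (Pi.mulSingle x c : X → M) = Pi.mulSingle (g • x) c := by
    ext y
    change (Pi.mulSingle x c : X → M) (g⁻¹ • y) = _
    simp only [Pi.mulSingle_apply, inv_smul_eq_iff]
  rw [hsingle]
  refine ⟨fun h => or_iff_not_imp_left.2 fun hgx => ?_, ?_⟩
  · simpa [Pi.mulSingle_eq_of_ne hgx] using congrFun h (g • x)
  · rintro (h | rfl) <;> simp [*]

theorem SemidirectProduct.commute_inr_inl_mulSingle_one_iff {A M : Type*} [Group A] [Group M]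
    {B : Subgroup A} [DecidableEq (A ⧸ B)] {a : A} {c : M} :
    Commute (SemidirectProduct.inr a : ((A ⧸ B) → M) ⋊[mulAutArrow] A)
      (SemidirectProduct.inl (Pi.mulSingle ((1 : A) : A ⧸ B) c)) ↔ a ∈ B ∨ c = 1 := by
  rw [SemidirectProduct.commute_inr_inl_iff, mulAutArrow_mulSingle_eq_self_iff,
    ← MulAction.mem_stabilizer_iff, MulAction.stabilizer_quotient]

namespace SpecialAmalgam

variable {A C₀ : Type u} [Group A] [Group C₀] {B : Subgroup A}

def lift {M : Type u} [Group M] (f : A →* M) (g : C₀ →* M)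
    (hfg : ∀ b ∈ B, ∀ c, Commute (f b) (g c)) : SpecialAmalgam A B C₀ →* M :=
  QuotientGroup.lift _
    (Coprod.lift f ((f.comp B.subtype).noncommCoprod g fun b c => hfg b b.2 c)) <| by
      refine Subgroup.normalClosure_le_normal ?_
      rintro _ ⟨b, rfl⟩
      rw [SetLike.mem_coe, MonoidHom.mem_ker, map_mul, map_inv, Coprod.lift_apply_inl,
        Coprod.lift_apply_inr]
      change f b * (f b * g 1)⁻¹ = 1
      simp

@[simp]
theorem lift_ofA {M : Type u} [Group M] (f : A →* M) (g : C₀ →* M)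
    (hfg : ∀ b ∈ B, ∀ c, Commute (f b) (g c)) (a : A) : lift f g hfg (ofA A B C₀ a) = f a :=
  Coprod.lift_apply_inl f ((f.comp B.subtype).noncommCoprod g fun b c => hfg b b.2 c) a

@[simp]
theorem lift_ofC {M : Type u} [Group M] (f : A →* M) (g : C₀ →* M)
    (hfg : ∀ b ∈ B, ∀ c, Commute (f b) (g c)) (c : C₀) : lift f g hfg (ofC A B C₀ c) = g c := by
  change f 1 * g c = g c
  simp

theorem ofA_injective : Function.Injective (ofA A B C₀) :=
  Function.LeftInverse.injective (g := lift (MonoidHom.id A) 1 fun _ _ _ => Commute.one_right _)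
    fun a => lift_ofA _ _ _ a

theorem ofC_injective : Function.Injective (ofC A B C₀) :=
  Function.LeftInverse.injective (g := lift 1 (MonoidHom.id C₀) fun _ _ _ => Commute.one_left _)
    fun c => lift_ofC _ _ _ c

theorem commute_ofA_ofC {b : A} (hb : b ∈ B) (c : C₀) :
    Commute (ofA A B C₀ b) (ofC A B C₀ c) := by
  have hb' : ofA A B C₀ b = QuotientGroup.mk (Coprod.inr ((⟨b, hb⟩, 1) : B × C₀)) :=
    QuotientGroup.eq_iff_div_mem.2 <| by
      rw [div_eq_mul_inv]
      exact Subgroup.subset_normalClosure ⟨⟨b, hb⟩, rfl⟩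
  rw [hb']
  exact ((Commute.prod (Commute.one_right _) (Commute.one_left c)).map
    (Coprod.inr : B × C₀ →* _)).map (QuotientGroup.mk' _)

open Classical in
noncomputable def toWreath : SpecialAmalgam A B C₀ →* ((A ⧸ B) → C₀) ⋊[mulAutArrow] A :=
  lift SemidirectProduct.inr
    (SemidirectProduct.inl.comp (MonoidHom.mulSingle (fun _ : A ⧸ B => C₀) ((1 : A) : A ⧸ B)))
    fun _ hb _ => SemidirectProduct.commute_inr_inl_mulSingle_one_iff.2 (Or.inl hb)

theorem toWreath_ofA (a : A) :
    toWreath (ofA A B C₀ a) = SemidirectProduct.inr a :=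
  lift_ofA _ _ _ a

open Classical in
theorem toWreath_ofC (c : C₀) :
    toWreath (ofC A B C₀ c) = SemidirectProduct.inl (Pi.mulSingle ((1 : A) : A ⧸ B) c) :=
  lift_ofC _ _ _ c

open Classical in
theorem commute_ofA_ofC_iff {a : A} {c : C₀} :
    Commute (ofA A B C₀ a) (ofC A B C₀ c) ↔ a ∈ B ∨ c = 1 := by
  refine ⟨fun h => ?_, ?_⟩
  · have h' := h.map toWreath
    rw [toWreath_ofA, toWreath_ofC] at h'
    exact SemidirectProduct.commute_inr_inl_mulSingle_one_iff.1 h'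
  · rintro (ha | rfl)
    · exact commute_ofA_ofC ha c
    · rw [map_one]
      exact Commute.one_right _

end SpecialAmalgam

theorem residuallyC_of_specialAmalgam_general (C : ∀ (G : Type u) [Group G], Prop)
    (hSub : ∀ (G : Type u) [Group G] (H : Subgroup G), C G → C H)
    (A C₀ : Type u) [Group A] [Group C₀] (B : Subgroup A) [Nontrivial C₀]
    (hG : ResiduallyC C (SpecialAmalgam A B C₀)) :
    ResiduallyC C A ∧ ResiduallyC C C₀ ∧ CClosed C (B : Set A) := by
  obtain ⟨c, hc⟩ := exists_ne (1 : C₀)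
  refine ⟨hG.of_injective hSub SpecialAmalgam.ofA_injective,
    hG.of_injective hSub SpecialAmalgam.ofC_injective,
    hG.cClosed_of_not_commute hSub (SpecialAmalgam.ofA A B C₀) fun a ha =>
      ⟨SpecialAmalgam.ofC A B C₀ c, fun _ hb => SpecialAmalgam.commute_ofA_ofC hb c,
        fun h => (SpecialAmalgam.commute_ofA_ofC_iff.1 h).elim ha hc⟩⟩

/-- If `C` is closed under isomorphism and subgroups, `C₀` is nontrivial, and
the special amalgam `A ⋆_B C₀` is residually `C`, then `A` and `C₀` are
residually `C` and `B` is `C`-closed in `A`. -/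
theorem residuallyC_of_specialAmalgam (C : ∀ (G : Type u) [Group G], Prop)
    (hIso : ∀ (G H : Type u) [Group G] [Group H], G ≃* H → C G → C H)
    (hSub : ∀ (G : Type u) [Group G] (H : Subgroup G), C G → C H)
    (A C₀ : Type u) [Group A] [Group C₀] (B : Subgroup A) [Nontrivial C₀]
    (hG : ResiduallyC C (SpecialAmalgam A B C₀)) :
    ResiduallyC C A ∧ ResiduallyC C C₀ ∧ CClosed C (B : Set A) :=
  residuallyC_of_specialAmalgam_general C hSub A C₀ B hG
end

section
/- Let B ≤ A and C₀ be groups and let G = A ⋆_B C₀ be their special amalgam. Suppose g = a₀ c₁ a₁ ⋯ cₙ aₙ and f = x₀ y₁ x₁ ⋯ y_m x_m are both in reduced form (i.e., all aᵢ, xᵢ ∈ A, all cⱼ, yⱼ ∈ C₀ are nontrivial, and the intermediate A-letters a₁,…,aₙ₋₁ and x₁,…,x_{m−1} lie outside B), with n, m ≥ 1. If f = g in G, then m = n and cᵢ = yᵢ for all i = 1,…,n. -/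
/-!
`A ⋆_B C₀` maps to the pushout of the diagram `A ← B → B × C₀` (a `Monoid.PushoutI` indexed
by `Bool`), where the normal form theorem is available. A reduced word `a₀ c₁ a₁ ⋯ cₙ aₙ` gives a
normal word whose letters alternate between `A ∖ B` and `(B × C₀) ∖ B`; normalising a letter only
multiplies it by elements of `B`, so the `C₀`-coordinates of the `B × C₀`-letters are exactly
`c₁, …, cₙ`. Uniqueness of normal words then recovers `n` and the `cᵢ` from the element.
-/

universe u

open Monoid

/-- The element `a₀ c₁ a₁ ⋯ cₙ aₙ` of the special amalgam `A ⋆_B C₀`. -/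
def SpecialAmalgam.word (A : Type u) [Group A] (B : Subgroup A) (C₀ : Type u) [Group C₀]
    (n : ℕ) (a : Fin (n + 1) → A) (c : Fin n → C₀) : SpecialAmalgam A B C₀ :=
  SpecialAmalgam.ofA A B C₀ (a 0) *
    (List.ofFn fun j : Fin n =>
      SpecialAmalgam.ofC A B C₀ (c j) * SpecialAmalgam.ofA A B C₀ (a j.succ)).prod

open Monoid.PushoutI Monoid.PushoutI.NormalWord Function

namespace SpecialAmalgam

variable (A : Type u) [Group A] (B : Subgroup A) (C₀ : Type u) [Group C₀]

-- Reducible, so that the group structure on `Factor A B C₀ true` is seen to be that of `A`.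
abbrev Factor : Bool → Type u
  | true => A
  | false => B × C₀

instance : ∀ i, Group (Factor A B C₀ i)
  | true => inferInstanceAs (Group A)
  | false => inferInstanceAs (Group (B × C₀))

def leg : ∀ i, B →* Factor A B C₀ i
  | true => B.subtype
  | false => MonoidHom.inl B C₀

theorem leg_injective : ∀ i, Injective (leg A B C₀ i)
  | true => B.subtype_injective
  | false => fun _ _ h => congrArg Prod.fst h

variable {A B C₀}

theorem of_true_coe (b : B) : of (φ := leg A B C₀) true (b : A) = base _ b :=
  of_apply_eq_base _ true b

theorem of_false_inl (b : B) : of (φ := leg A B C₀) false ((b, 1) : B × C₀) = base _ b :=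
  of_apply_eq_base _ false b

variable (A B C₀)

def toPushout : SpecialAmalgam A B C₀ →* PushoutI (leg A B C₀) :=
  QuotientGroup.lift _ (Coprod.lift (of (φ := leg A B C₀) true) (of (φ := leg A B C₀) false)) <|
    Subgroup.normalClosure_le_normal <| by
      rintro _ ⟨b, rfl⟩
      rw [SetLike.mem_coe, MonoidHom.mem_ker, map_mul, map_inv, Coprod.lift_apply_inl,
        Coprod.lift_apply_inr, of_true_coe, of_false_inl, mul_inv_cancel]

variable {A B C₀}

theorem toPushout_ofA (a : A) : toPushout A B C₀ (ofA A B C₀ a) = of true a :=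
  Coprod.lift_apply_inl (of true) (of (φ := leg A B C₀) false) a

theorem toPushout_ofC (c : C₀) : toPushout A B C₀ (ofC A B C₀ c) = of false ((1 : B), c) :=
  Coprod.lift_apply_inr (of true) (of (φ := leg A B C₀) false) ((1 : B), c)

theorem toPushout_word (k : ℕ) (u : Fin (k + 1) → A) (v : Fin k → C₀) :
    toPushout A B C₀ (word A B C₀ k u v) = of true (u 0) *
      (List.ofFn fun j => of false ((1 : B), v j) * of (φ := leg A B C₀) true (u j.succ)).prod := by
  simp [word, map_list_prod, List.map_ofFn, comp_def, toPushout_ofA, toPushout_ofC]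

variable {d : Transversal (leg A B C₀)}

def cSyllables (w : NormalWord d) : List C₀ :=
  w.toList.filterMap fun
    | ⟨true, _⟩ => none
    | ⟨false, g⟩ => some g.2

theorem snd_compl_equiv_snd (x : B × C₀) : (((d.compl false).equiv x).2 : B × C₀).2 = x.2 := by
  obtain ⟨b, hb⟩ := ((d.compl false).equiv x).1.2
  have h := congrArg Prod.snd ((d.compl false).equiv_fst_mul_equiv_snd x)
  rw [Prod.snd_mul, ← hb] at h
  simpa [leg] using h

theorem cSyllables_cons_false (g : B × C₀) (w : NormalWord d) (hmw : w.fstIdx ≠ some false)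
    (hgr : g ∉ (leg A B C₀ false).range) :
    cSyllables (cons (i := false) g w hmw hgr) = g.2 :: cSyllables w := by
  show (((d.compl false).equiv (g * leg A B C₀ false w.head)).2 : B × C₀).2 :: cSyllables w = _
  rw [snd_compl_equiv_snd]
  simp [leg]

theorem exists_normalWord_ofA_mul (a : A) (w : NormalWord d) (hw : w.fstIdx ≠ some true) :
    ∃ w' : NormalWord d, w'.prod = of true a * w.prod ∧ cSyllables w' = cSyllables w ∧
      (w'.fstIdx = some true ∨ a ∈ B ∧ w'.fstIdx = w.fstIdx) := by
  by_cases ha : a ∈ B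
  · refine ⟨(⟨a, ha⟩ : B) • w, ?_, rfl, .inr ⟨ha, rfl⟩⟩
    rw [prod_base_smul, ← of_true_coe]
  · have hgr : a ∉ (leg A B C₀ true).range := by
      rintro ⟨b, rfl⟩
      exact ha b.2
    exact ⟨cons (i := true) a w hw hgr, prod_cons _ _ _ _, rfl, .inl rfl⟩

theorem exists_normalWord_tail (k : ℕ) (u : Fin k → A) (v : Fin k → C₀) (hv : ∀ j, v j ≠ 1)
    (hu : ∀ j : Fin k, (j : ℕ) + 1 < k → u j ∉ B) :
    ∃ w : NormalWord d,
      w.prod = (List.ofFn fun j =>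
        of false ((1 : B), v j) * of (φ := leg A B C₀) true (u j)).prod ∧
      cSyllables w = List.ofFn v ∧ w.fstIdx = if k = 0 then none else some false := by
  induction k with
  | zero => exact ⟨empty, by simp, rfl, rfl⟩
  | succ k ih =>
    obtain ⟨w, hw, hwc, hwi⟩ := ih (fun j => u j.succ) (fun j => v j.succ) (fun j => hv j.succ)
      (fun j hj => hu j.succ (by simpa using hj))
    obtain ⟨w₁, hw₁, hw₁c, hw₁i⟩ :=
      exists_normalWord_ofA_mul (u 0) w (by split_ifs at hwi <;> simp [hwi])
    have hw₁i' : w₁.fstIdx ≠ some false := by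
      rcases hw₁i with hw₁i | ⟨hu₀, hw₁i⟩
      · simp [hw₁i]
      · have hk : k = 0 := by
          by_contra hk
          exact hu 0 (by simpa using Nat.pos_of_ne_zero hk) hu₀
        simp [hw₁i, hwi, hk]
    have hgr : ((1 : B), v 0) ∉ (leg A B C₀ false).range :=
      fun ⟨_, hb⟩ => hv 0 (congrArg Prod.snd hb).symm
    refine ⟨cons (i := false) ((1 : B), v 0) w₁ hw₁i' hgr, ?_, ?_, rfl⟩
    · rw [prod_cons, hw₁, hw, List.ofFn_succ, List.prod_cons, mul_assoc]
    · rw [cSyllables_cons_false, hw₁c, hwc, List.ofFn_succ]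

theorem exists_normalWord_word (k : ℕ) (u : Fin (k + 1) → A) (v : Fin k → C₀)
    (hv : ∀ j, v j ≠ 1) (hu : ∀ i : Fin (k + 1), 0 < (i : ℕ) → (i : ℕ) < k → u i ∉ B) :
    ∃ w : NormalWord d, w.prod = toPushout A B C₀ (word A B C₀ k u v) ∧
      cSyllables w = List.ofFn v := by
  obtain ⟨w, hw, hwc, hwi⟩ := exists_normalWord_tail (d := d) k (fun j => u j.succ) v hv
    (fun j hj => hu j.succ (Nat.succ_pos _) hj)
  obtain ⟨w', hw', hw'c, -⟩ :=
    exists_normalWord_ofA_mul (u 0) w (by split_ifs at hwi <;> simp [hwi])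
  exact ⟨w', by rw [hw', hw, toPushout_word], hw'c.trans hwc⟩

end SpecialAmalgam

theorem specialAmalgam_reduced_word_unique_general
    (A C₀ : Type u) [Group A] [Group C₀] (B : Subgroup A)
    (n m : ℕ)
    (a : Fin (n + 1) → A) (c : Fin n → C₀)
    (x : Fin (m + 1) → A) (y : Fin m → C₀)
    (hc : ∀ j : Fin n, c j ≠ 1)
    (ha : ∀ i : Fin (n + 1), 0 < (i : ℕ) → (i : ℕ) < n → a i ∉ B)
    (hy : ∀ j : Fin m, y j ≠ 1)
    (hx : ∀ i : Fin (m + 1), 0 < (i : ℕ) → (i : ℕ) < m → x i ∉ B)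
    (heq : SpecialAmalgam.word A B C₀ m x y = SpecialAmalgam.word A B C₀ n a c) :
    m = n ∧ ∀ (i : ℕ) (hi : i < n) (hj : i < m), c ⟨i, hi⟩ = y ⟨i, hj⟩ := by
  obtain ⟨d⟩ := transversal_nonempty _ (SpecialAmalgam.leg_injective A B C₀)
  obtain ⟨wx, hwx, hwxc⟩ := SpecialAmalgam.exists_normalWord_word (d := d) m x y hy hx
  obtain ⟨wa, hwa, hwac⟩ := SpecialAmalgam.exists_normalWord_word (d := d) n a c hc ha
  have hw : wx = wa := prod_injective (by rw [hwx, hwa, heq])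
  have hyc : List.ofFn y = List.ofFn c := by rw [← hwxc, ← hwac, hw]
  obtain ⟨rfl, hyc⟩ := Sigma.mk.inj_iff.mp (List.ofFn_inj'.mp hyc)
  exact ⟨rfl, fun i _ _ => by rw [eq_of_heq hyc]⟩

/-- If two words `a₀ c₁ a₁ ⋯ cₙ aₙ` and `x₀ y₁ x₁ ⋯ y_m x_m` in reduced form,
with `n, m ≥ 1`, represent the same element of the special amalgam
`A ⋆_B C₀`, then `m = n` and `cᵢ = yᵢ` for all `i`. -/
theorem specialAmalgam_reduced_word_unique
    (A C₀ : Type u) [Group A] [Group C₀] (B : Subgroup A)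
    (n m : ℕ) (hn : 1 ≤ n) (hm : 1 ≤ m)
    (a : Fin (n + 1) → A) (c : Fin n → C₀)
    (x : Fin (m + 1) → A) (y : Fin m → C₀)
    (hc : ∀ j : Fin n, c j ≠ 1)
    (ha : ∀ i : Fin (n + 1), 0 < (i : ℕ) → (i : ℕ) < n → a i ∉ B)
    (hy : ∀ j : Fin m, y j ≠ 1)
    (hx : ∀ i : Fin (m + 1), 0 < (i : ℕ) → (i : ℕ) < m → x i ∉ B)
    (heq : SpecialAmalgam.word A B C₀ m x y = SpecialAmalgam.word A B C₀ n a c) :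
    m = n ∧ ∀ (i : ℕ) (hi : i < n) (hj : i < m), c ⟨i, hi⟩ = y ⟨i, hj⟩ :=
  specialAmalgam_reduced_word_unique_general A C₀ B n m a c x y hc ha hy hx heq
end
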